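/- arXiv:2402.04071 — 5 statements merged into one kernel-verified Lean document; each statement's English description precedes it below -/
import Mathlib

section
/- Let X, Y be n×n complex Hermitian matrices with X positive definite. Then |det(X + iY)| ≥ det(X) · det(1 + Y²/‖X‖²)^{1/2}, where ‖X‖ is the operator norm. -/
/-!
Since `(X - iY) X⁻¹ (X + iY) = X + Y X⁻¹ Y`, we have `|det (X + iY)|² = det X · det (X + Y X⁻¹ Y)`.
With `c = ‖X‖`, the operator inequality `X ≤ c` inverts to `c⁻¹ ≤ X⁻¹`, and the determinant is
monotone on positive definite matrices, so
`det (X + Y X⁻¹ Y) ≥ det (X + c⁻¹ Y²) = det X · det (1 + c⁻¹ Y X⁻¹ Y) ≥ det X · det (1 + c⁻² Y²)`,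
the middle equality being the Weinstein–Aronszajn identity.
-/

open Matrix
open scoped ComplexOrder MatrixOrder

lemma CStarAlgebra.algebraMap_inv_norm_le_inv {A : Type*} [CStarAlgebra A] [PartialOrder A]
    [StarOrderedRing A] {a : Aˣ} (ha : 0 ≤ (a : A)) :
    algebraMap ℝ A ‖(a : A)‖⁻¹ ≤ ↑a⁻¹ := by
  by_cases! nontriv : Nontrivial A
  · have hnorm : ‖(a : A)‖ ≠ 0 := (norm_pos_iff.2 a.ne_zero).ne'
    let u : Aˣ := Units.map (algebraMap ℝ A) (Units.mk0 _ hnorm)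
    have hau : (a : A) ≤ u := (IsSelfAdjoint.of_nonneg ha).le_algebraMap_norm_self
    simpa [u] using CStarAlgebra.inv_le_inv ha hau
  · exact le_of_eq (Subsingleton.elim _ _)

lemma IsSelfAdjoint.smul_mul_self_le_mul_mul {R : Type*} [Ring R] [PartialOrder R] [StarRing R]
    [StarOrderedRing R] [Algebra ℝ R] {y m : R} (hy : IsSelfAdjoint y) {r : ℝ}
    (h : algebraMap ℝ R r ≤ m) : r • (y * y) ≤ y * m * y := by
  have h' := star_left_conjugate_le_conjugate h y
  rwa [hy.star_eq, ← Algebra.commutes, mul_assoc, ← Algebra.smul_def] at h'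

namespace Matrix

variable {n : Type*} [Fintype n] [DecidableEq n]

section RCLike

variable {𝕜 : Type*} [RCLike 𝕜]

lemma one_le_det_of_one_le {M : Matrix n n 𝕜} (h : 1 ≤ M) : 1 ≤ M.det := by
  have hM : M.IsHermitian := by simpa using (le_iff.1 h).isHermitian.add isHermitian_one
  have h1 : algebraMap ℝ (Matrix n n 𝕜) 1 ≤ M := by simpa using h
  rw [hM.det_eq_prod_eigenvalues, ← RCLike.ofReal_prod, ← RCLike.ofReal_one,
    RCLike.ofReal_le_ofReal]
  exact Finset.one_le_prod fun i _ =>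
    (algebraMap_le_iff_le_spectrum hM.isSelfAdjoint).1 h1 _ (hM.eigenvalues_mem_spectrum_real i)

lemma PosDef.det_le_det {A B : Matrix n n 𝕜} (hA : A.PosDef) (hAB : A ≤ B) : A.det ≤ B.det := by
  -- conjugating by `T = A^(-1/2)` turns `A ≤ B` into `1 ≤ T B T`, and `det B = det A · det (T B T)`
  set S := CFC.sqrt A
  have hSS : S * S = A := CFC.sqrt_mul_sqrt_self A hA.posSemidef.nonneg
  have hSh : Sᴴ = S := (CFC.sqrt_nonneg A).isSelfAdjoint
  have hS : IsUnit S.det :=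
    (isUnit_iff_isUnit_det S).1 <| (CFC.isUnit_sqrt_iff A hA.posSemidef.nonneg).2 hA.isUnit
  set T := S⁻¹
  have hTAT : star T * A * T = 1 := by
    rw [star_eq_conjTranspose, conjTranspose_nonsing_inv, hSh, ← hSS, Matrix.mul_assoc,
      Matrix.mul_assoc, nonsing_inv_mul_cancel_left _ _ hS]
    exact mul_nonsing_inv _ hS
  have hdet : A.det * (star T * B * T).det = B.det := by
    have h1 : (star T).det * A.det * T.det = 1 := by rw [← det_mul, ← det_mul, hTAT, det_one]
    simp only [det_mul]
    linear_combination B.det * h1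
  have key : 1 ≤ (star T * B * T).det := by
    apply one_le_det_of_one_le
    rw [← hTAT]
    exact star_left_conjugate_le_conjugate hAB T
  rw [← hdet]
  exact le_mul_of_one_le_right hA.posSemidef.det_nonneg key

variable {X Y : Matrix n n 𝕜} {r : ℝ}

lemma det_add_smul_mul_self_le (hX : X.PosDef) (hY : Y.IsHermitian) (hr : 0 ≤ r)
    (hrX : algebraMap ℝ _ r ≤ X⁻¹) : (X + r • (Y * Y)).det ≤ (X + Y * X⁻¹ * Y).det := by
  have hpos : (X + r • (Y * Y)).PosDef := hX.add_posSemidef <|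
    nonneg_iff_posSemidef.1 (smul_nonneg hr hY.isSelfAdjoint.mul_self_nonneg)
  exact hpos.det_le_det (add_le_add_right (hY.isSelfAdjoint.smul_mul_self_le_mul_mul hrX) X)

lemma det_mul_det_one_add_sq_smul_le (hX : X.PosDef) (hY : Y.IsHermitian) (hr : 0 ≤ r)
    (hrX : algebraMap ℝ _ r ≤ X⁻¹) :
    X.det * (1 + (r ^ 2) • (Y * Y)).det ≤ (X + r • (Y * Y)).det := by
  have hdet : (X + r • (Y * Y)).det = X.det * (1 + r • (Y * X⁻¹ * Y)).det := by
    rw [← Matrix.smul_mul, det_add_mul _ _ ((isUnit_iff_isUnit_det X).1 hX.isUnit),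
      Matrix.mul_smul]
  have hle : 1 + (r ^ 2) • (Y * Y) ≤ 1 + r • (Y * X⁻¹ * Y) := by
    rw [sq, mul_smul]
    exact add_le_add_right
      (smul_le_smul_of_nonneg_left (hY.isSelfAdjoint.smul_mul_self_le_mul_mul hrX) hr) 1
  have hpos : (1 + (r ^ 2) • (Y * Y)).PosDef := PosDef.one.add_posSemidef <|
    nonneg_iff_posSemidef.1 (smul_nonneg (sq_nonneg r) hY.isSelfAdjoint.mul_self_nonneg)
  rw [hdet]
  exact mul_le_mul_of_nonneg_left (hpos.det_le_det hle) hX.posSemidef.det_nonneg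

end RCLike

open scoped Matrix.Norms.L2Operator in
lemma PosDef.algebraMap_inv_norm_le_inv {X : Matrix n n ℂ} (hX : X.PosDef) :
    algebraMap ℝ _ ‖toEuclideanCLM (𝕜 := ℂ) X‖⁻¹ ≤ X⁻¹ := by
  have h := CStarAlgebra.algebraMap_inv_norm_le_inv (a := hX.isUnit.unit) hX.posSemidef.nonneg
  rwa [coe_units_inv, IsUnit.unit_spec, cstar_norm_def] at h

lemma star_det_mul_det_add_I_smul {X Y : Matrix n n ℂ} (hX : X.IsHermitian) (hY : Y.IsHermitian)
    (hXu : IsUnit X.det) :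
    star (X + Complex.I • Y).det * (X + Complex.I • Y).det = X.det * (X + Y * X⁻¹ * Y).det := by
  have hconj : (X + Complex.I • Y)ᴴ = X - Complex.I • Y := by
    rw [conjTranspose_add, conjTranspose_smul, hX.eq, hY.eq, Complex.star_def, Complex.conj_I,
      neg_smul, sub_eq_add_neg]
  have hprod : (X - Complex.I • Y) * X⁻¹ * (X + Complex.I • Y) = X + Y * X⁻¹ * Y := by
    simp only [sub_mul, mul_add, Matrix.mul_assoc, mul_nonsing_inv_cancel_left _ _ hXu,
      nonsing_inv_mul _ hXu, Matrix.smul_mul, Matrix.mul_smul, smul_smul, Complex.I_mul_I,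
      Matrix.mul_one]
    module
  have hXinv : X.det * X⁻¹.det = 1 := by rw [← det_mul, mul_nonsing_inv _ hXu, det_one]
  rw [← det_conjTranspose, hconj, ← hprod, det_mul, det_mul]
  linear_combination -(X - Complex.I • Y).det * (X + Complex.I • Y).det * hXinv

lemma PosSemidef.det_eq_ofReal_re {M : Matrix n n ℂ} (hM : M.PosSemidef) : M.det = M.det.re :=
  Complex.eq_re_of_ofReal_le (r := 0) (by simpa using hM.det_nonneg)

end Matrix

theorem stmt_0_general (n : ℕ) (X Y : Matrix (Fin n) (Fin n) ℂ)
    (hY : Y.IsHermitian) (hXpd : X.PosDef) :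
    ‖(X + Complex.I • Y).det‖ ≥
      X.det.re *
        Real.sqrt ((1 + ((‖Matrix.toEuclideanCLM (𝕜 := ℂ) X‖ : ℝ) ^ 2)⁻¹ • (Y * Y)).det.re) := by
  set c := ‖toEuclideanCLM (𝕜 := ℂ) X‖
  set M := 1 + (c ^ 2)⁻¹ • (Y * Y)
  have hc : 0 ≤ c⁻¹ := inv_nonneg.2 (norm_nonneg _)
  have hcX := hXpd.algebraMap_inv_norm_le_inv
  have key : X.det * (X.det * M.det) ≤ star (X + Complex.I • Y).det * (X + Complex.I • Y).det := by
    rw [star_det_mul_det_add_I_smul hXpd.isHermitian hY ((isUnit_iff_isUnit_det X).1 hXpd.isUnit)]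
    refine mul_le_mul_of_nonneg_left ?_ hXpd.posSemidef.det_nonneg
    have h := (det_mul_det_one_add_sq_smul_le hXpd hY hc hcX).trans
      (det_add_smul_mul_self_le hXpd hY hc hcX)
    rwa [inv_pow] at h
  have hM : M.PosSemidef := PosSemidef.one.add <| nonneg_iff_posSemidef.1 <|
    smul_nonneg (by positivity) hY.isSelfAdjoint.mul_self_nonneg
  rw [hXpd.posSemidef.det_eq_ofReal_re, hM.det_eq_ofReal_re, Complex.star_def,
    Complex.conj_mul'] at key
  norm_cast at key
  have hx : 0 ≤ X.det.re := by simpa using (Complex.le_def.1 hXpd.posSemidef.det_nonneg).1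
  rw [ge_iff_le, ← Real.sqrt_sq (norm_nonneg _), ← Real.sqrt_sq hx, ← Real.sqrt_mul (sq_nonneg _)]
  exact Real.sqrt_le_sqrt (by linarith)

/-- For Hermitian `X, Y` with `X` positive definite,
`|det(X + iY)| ≥ det X · det(1 + Y²/‖X‖²)^{1/2}`, with `‖X‖` the operator norm. -/
theorem stmt_0 (n : ℕ) (X Y : Matrix (Fin n) (Fin n) ℂ)
    (hX : X.IsHermitian) (hY : Y.IsHermitian) (hXpd : X.PosDef) :
    ‖(X + Complex.I • Y).det‖ ≥
      X.det.re *
        Real.sqrt ((1 + ((‖Matrix.toEuclideanCLM (𝕜 := ℂ) X‖ : ℝ) ^ 2)⁻¹ • (Y * Y)).det.re) :=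
  stmt_0_general n X Y hY hXpd
end

section
/- Let A be a positive semi-definite complex block matrix with diagonal blocks A_{jj}. Then det A ≤ ∏_j det A_{jj} (Fischer's inequality). -/
/-!
If the block `B = A₁₁` of `A = [B C; Cᴴ D]` is singular, so is `A`. Otherwise
`det A = det B · det (D - Cᴴ B⁻¹ C)`, and the Schur complement is positive semidefinite and lies
below `D` in the Loewner order. The determinant is monotone on positive semidefinite matrices:
writing `X = Yᴴ Y`, one has `det (X + S) = det X · det (1 + T)` with `T = Y⁻¹ᴴ S Y⁻¹ ⪰ 0`, whose
eigenvalues are all at least `1`. Splitting off one diagonal block at a time gives the inequality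
for `k` blocks. Determinants are compared in `ℂ` with its partial order, in which nonnegative
numbers are real.
-/

open scoped ComplexOrder

def Equiv.sigmaFinSucc {k : ℕ} (κ : Fin (k + 1) → Type*) :
    (Σ j, κ j) ≃ κ 0 ⊕ Σ j : Fin k, κ j.succ where
  toFun x := Fin.cases (motive := fun j => κ j → κ 0 ⊕ Σ j : Fin k, κ j.succ)
    Sum.inl (fun j a => Sum.inr ⟨j, a⟩) x.1 x.2
  invFun := Sum.elim (Sigma.mk 0) (Sigma.map Fin.succ fun _ => id)
  left_inv := by
    rintro ⟨j, a⟩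
    induction j using Fin.cases <;> rfl
  right_inv := by rintro (a | ⟨j, a⟩) <;> rfl

theorem Complex.re_prod_of_nonneg {ι : Type*} {s : Finset ι} {f : ι → ℂ} (hf : ∀ i ∈ s, 0 ≤ f i) :
    (∏ i ∈ s, f i).re = ∏ i ∈ s, (f i).re := by
  rw [Finset.prod_congr rfl fun i hi => eq_re_of_ofReal_le (r := 0) (by simpa using hf i hi),
    ← ofReal_prod, ofReal_re]

namespace Matrix

open scoped MatrixOrder

variable {𝕜 : Type*} [RCLike 𝕜] {m n : Type*} [Fintype m] [DecidableEq m] [Fintype n]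
  [DecidableEq n]

lemma PosSemidef.one_le_det_one_add {T : Matrix n n 𝕜} (hT : T.PosSemidef) : 1 ≤ (1 + T).det := by
  rw [hT.1.spectral_theorem, ← map_one (Unitary.conjStarAlgAut 𝕜 _ hT.1.eigenvectorUnitary),
    ← map_add, det_map', ← diagonal_one, diagonal_add, det_diagonal]
  exact Finset.one_le_prod fun i _ => by simpa using hT.eigenvalues_nonneg i

lemma PosSemidef.det_le_det_add {X S : Matrix n n 𝕜} (hX : X.PosSemidef) (hS : S.PosSemidef) :
    X.det ≤ (X + S).det := by
  obtain hX₀ | hX₀ := eq_or_ne X.det 0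
  · rw [hX₀]
    exact (hX.add hS).det_nonneg
  obtain ⟨Y, rfl⟩ := CStarAlgebra.nonneg_iff_eq_star_mul_self.mp hX.nonneg
  have hY : IsUnit Y.det := isUnit_iff_ne_zero.mpr (right_ne_zero_of_mul (det_mul _ Y ▸ hX₀))
  have hYinv : Y⁻¹ * Y = 1 := nonsing_inv_mul Y hY
  have hT : (Y⁻¹ᴴ * S * Y⁻¹).PosSemidef := hS.conjTranspose_mul_mul_same _
  have hfactor : star Y * Y + S = star Y * (1 + Y⁻¹ᴴ * S * Y⁻¹) * Y := by
    rw [star_eq_conjTranspose, mul_add, add_mul, mul_one, ← mul_assoc, ← mul_assoc,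
      ← conjTranspose_mul, hYinv, conjTranspose_one, one_mul, mul_assoc, hYinv, mul_one]
  rw [hfactor, det_mul, det_mul, det_mul, mul_right_comm (star Y).det, ← det_mul]
  exact le_mul_of_one_le_right hX.det_nonneg hT.one_le_det_one_add

lemma PosSemidef.det_fromBlocks_le {B : Matrix m m 𝕜} {C : Matrix m n 𝕜} {D : Matrix n n 𝕜}
    (hA : (fromBlocks B C Cᴴ D).PosSemidef) : (fromBlocks B C Cᴴ D).det ≤ B.det * D.det := by
  have hB : B.PosSemidef := hA.submatrix Sum.inl
  obtain hB₀ | hB₀ := eq_or_ne B.det 0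
  · have hA₀ : (fromBlocks B C Cᴴ D).det = 0 := by
      by_contra hA₀
      exact hB.posDef_iff_det_ne_zero.mp
        ((hA.posDef_iff_det_ne_zero.mpr hA₀).submatrix Sum.inl_injective) hB₀
    rw [hA₀, hB₀, zero_mul]
  have hBpos : B.PosDef := hB.posDef_iff_det_ne_zero.mpr hB₀
  have := B.invertibleOfIsUnitDet (isUnit_iff_ne_zero.mpr hB₀)
  have hSchur : (D - Cᴴ * B⁻¹ * C).PosSemidef := (PosDef.fromBlocks₁₁ C D hBpos).mp hA
  have hCBC : (Cᴴ * B⁻¹ * C).PosSemidef := hBpos.inv.posSemidef.conjTranspose_mul_mul_same C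
  rw [det_fromBlocks₁₁, invOf_eq_nonsing_inv]
  exact mul_le_mul_of_nonneg_left (by simpa using hSchur.det_le_det_add hCBC) hB.det_nonneg

lemma PosSemidef.det_le_det_toBlocks₁₁_mul_det_toBlocks₂₂ {A : Matrix (m ⊕ n) (m ⊕ n) 𝕜}
    (hA : A.PosSemidef) : A.det ≤ A.toBlocks₁₁.det * A.toBlocks₂₂.det := by
  rw [← fromBlocks_toBlocks A] at hA ⊢
  obtain ⟨-, h₂₁, -, -⟩ := isHermitian_fromBlocks_iff.mp hA.1
  rw [← h₂₁] at hA ⊢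
  exact hA.det_fromBlocks_le

theorem PosSemidef.det_le_prod_det_submatrix_sigmaMk {k : ℕ} {κ : Fin k → Type*}
    [∀ j, Fintype (κ j)] [∀ j, DecidableEq (κ j)] {A : Matrix (Σ j, κ j) (Σ j, κ j) 𝕜}
    (hA : A.PosSemidef) : A.det ≤ ∏ j, (A.submatrix (Sigma.mk j) (Sigma.mk j)).det := by
  induction k with
  | zero => simp
  | succ k ih =>
    set e := (Equiv.sigmaFinSucc κ).symm
    have hA' : (A.submatrix e e).PosSemidef := hA.submatrix e
    rw [← det_submatrix_equiv_self e A, Fin.prod_univ_succ]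
    refine hA'.det_le_det_toBlocks₁₁_mul_det_toBlocks₂₂.trans ?_
    exact mul_le_mul_of_nonneg_left (ih (hA'.submatrix Sum.inr)) (hA'.submatrix Sum.inl).det_nonneg

end Matrix

/-- Fischer's inequality: for a positive semidefinite block matrix `A`,
`det A ≤ ∏ j det A_{jj}` (the dets are real since `A` and its diagonal blocks are PSD). -/
theorem stmt_1 (k : ℕ) (m : Fin k → ℕ)
    (A : Matrix ((j : Fin k) × Fin (m j)) ((j : Fin k) × Fin (m j)) ℂ)
    (hA : A.PosSemidef) :
    A.det.re ≤ ∏ j : Fin k, (Matrix.of fun a b : Fin (m j) => A ⟨j, a⟩ ⟨j, b⟩).det.re :=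
  (Complex.le_def.mp hA.det_le_prod_det_submatrix_sigmaMk).1.trans_eq
    (Complex.re_prod_of_nonneg fun j _ => (hA.submatrix (Sigma.mk j)).det_nonneg)
end

section
/- Let A ∈ M_n(ℂ) be invertible, U = (U_k, U_{n-k}) ∈ U(n) a unitary with U_k the first k columns, and B = U_{n-k}* A U_{n-k} invertible. Then U · diag(0, B^{-1}) · U* = A^{-1} − A^{-1} U_k (U_k* A^{-1} U_k)^{-1} U_k* A^{-1}. -/
/-!
Put `M = A⁻¹ - A⁻¹ X C⁻¹ Xᴴ A⁻¹` (`deflatedInv A X`) with `X = U_k`, `Y = U_{n-k}`, `C = Xᴴ A⁻¹ X`.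
Then `M X = 0` and `Xᴴ M = 0`, so in the basis `U` the matrix `M` lives in the `Y`-block,
and that block inverts `B = Yᴴ A Y`: inserting `Y Yᴴ = 1 - X Xᴴ` and using `M X = 0`,
`(Yᴴ M Y) B = Yᴴ M A Y = Yᴴ (1 - A⁻¹ X C⁻¹ Xᴴ) Y = 1` because `Xᴴ Y = 0`.
Conjugating `Uᴴ M U = diag(0, B⁻¹)` back by `U` gives the identity.
-/

open Matrix

namespace Matrix

variable {n k l R : Type*} [Fintype n] [DecidableEq n] [Fintype k] [DecidableEq k]
  [Fintype l] [DecidableEq l] [CommRing R] [Star R]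

section DeflatedInv

variable (A : Matrix n n R) (X : Matrix n k R)

noncomputable def deflatedInv : Matrix n n R :=
  A⁻¹ - A⁻¹ * X * (Xᴴ * A⁻¹ * X)⁻¹ * Xᴴ * A⁻¹

variable {A X}

theorem deflatedInv_mul_self (hC : IsUnit (Xᴴ * A⁻¹ * X).det) :
    deflatedInv A X * X = 0 := by
  calc deflatedInv A X * X
      = A⁻¹ * X - A⁻¹ * X * ((Xᴴ * A⁻¹ * X)⁻¹ * (Xᴴ * A⁻¹ * X)) := by
        simp only [deflatedInv, Matrix.sub_mul, Matrix.mul_assoc]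
    _ = 0 := by rw [nonsing_inv_mul _ hC, Matrix.mul_one, sub_self]

theorem conjTranspose_mul_deflatedInv (hC : IsUnit (Xᴴ * A⁻¹ * X).det) :
    Xᴴ * deflatedInv A X = 0 := by
  calc Xᴴ * deflatedInv A X
      = Xᴴ * A⁻¹ - (Xᴴ * A⁻¹ * X) * (Xᴴ * A⁻¹ * X)⁻¹ * (Xᴴ * A⁻¹) := by
        simp only [deflatedInv, Matrix.mul_sub, Matrix.mul_assoc]
    _ = 0 := by rw [mul_nonsing_inv _ hC, Matrix.one_mul, sub_self]

theorem deflatedInv_mul (hA : IsUnit A.det) :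
    deflatedInv A X * A = 1 - A⁻¹ * X * (Xᴴ * A⁻¹ * X)⁻¹ * Xᴴ := by
  rw [deflatedInv, Matrix.sub_mul, Matrix.mul_assoc _ A⁻¹ A, nonsing_inv_mul _ hA,
    Matrix.mul_one]

theorem conjTranspose_mul_deflatedInv_mul_eq_inv {Y : Matrix n l R}
    (hA : IsUnit A.det) (hC : IsUnit (Xᴴ * A⁻¹ * X).det)
    (hXY : Xᴴ * Y = 0) (hYY : Yᴴ * Y = 1) (hP : X * Xᴴ + Y * Yᴴ = 1) :
    Yᴴ * deflatedInv A X * Y = (Yᴴ * A * Y)⁻¹ := by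
  refine (inv_eq_left_inv ?_).symm
  calc Yᴴ * deflatedInv A X * Y * (Yᴴ * A * Y)
      = Yᴴ * deflatedInv A X * (Y * Yᴴ) * A * Y := by simp only [Matrix.mul_assoc]
    _ = Yᴴ * (deflatedInv A X * A) * Y - Yᴴ * (deflatedInv A X * X) * Xᴴ * A * Y := by
        rw [eq_sub_of_add_eq' hP]
        simp only [Matrix.mul_sub, Matrix.sub_mul, Matrix.mul_one, Matrix.mul_assoc]
    _ = Yᴴ * Y - Yᴴ * A⁻¹ * X * (Xᴴ * A⁻¹ * X)⁻¹ * (Xᴴ * Y) := by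
        rw [deflatedInv_mul_self hC, deflatedInv_mul hA]
        simp only [Matrix.mul_sub, Matrix.sub_mul, Matrix.mul_one, Matrix.mul_zero,
          Matrix.zero_mul, sub_zero, Matrix.mul_assoc]
    _ = 1 := by rw [hXY, hYY, Matrix.mul_zero, sub_zero]

end DeflatedInv

theorem mul_fromBlocks_zero_inv_mul_conjTranspose_eq_deflatedInv {A : Matrix n n R}
    {U : Matrix n (k ⊕ l) R} (hU : Uᴴ * U = 1) (hU' : U * Uᴴ = 1)
    (hA : IsUnit A.det) (hC : IsUnit (U.toCols₁ᴴ * A⁻¹ * U.toCols₁).det) :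
    U * fromBlocks (0 : Matrix k k R) 0 0 (U.toCols₂ᴴ * A * U.toCols₂)⁻¹ * Uᴴ
      = deflatedInv A U.toCols₁ := by
  set X := U.toCols₁
  set Y := U.toCols₂
  have hUcols : U = fromCols X Y := (fromCols_toCols U).symm
  have hUrows : Uᴴ = fromRows Xᴴ Yᴴ := by
    rw [hUcols, conjTranspose_fromCols_eq_fromRows_conjTranspose]
  obtain ⟨-, hXY, -, hYY⟩ : Xᴴ * X = 1 ∧ Xᴴ * Y = 0 ∧ Yᴴ * X = 0 ∧ Yᴴ * Y = 1 := by
    rwa [hUrows, hUcols, fromRows_mul_fromCols, ← fromBlocks_one, fromBlocks_inj] at hU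
  have hP : X * Xᴴ + Y * Yᴴ = 1 := by
    rwa [hUrows, hUcols, fromCols_mul_fromRows] at hU'
  have hBlocks :
      Uᴴ * deflatedInv A X * U = fromBlocks (0 : Matrix k k R) 0 0 (Yᴴ * A * Y)⁻¹ := by
    rw [hUrows, hUcols, fromRows_mul, fromRows_mul_fromCols, conjTranspose_mul_deflatedInv hC,
      Matrix.mul_assoc Yᴴ, deflatedInv_mul_self hC,
      conjTranspose_mul_deflatedInv_mul_eq_inv hA hC hXY hYY hP]
    simp only [Matrix.zero_mul, Matrix.mul_zero]
  calc U * fromBlocks (0 : Matrix k k R) 0 0 (Yᴴ * A * Y)⁻¹ * Uᴴ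
      = U * (Uᴴ * deflatedInv A X * U) * Uᴴ := by rw [hBlocks]
    _ = (U * Uᴴ) * deflatedInv A X * (U * Uᴴ) := by simp only [Matrix.mul_assoc]
    _ = deflatedInv A X := by rw [hU', Matrix.one_mul, Matrix.mul_one]

end Matrix

theorem stmt_2_general (k l : ℕ)
    (A : Matrix (Fin (k + l)) (Fin (k + l)) ℂ)
    (U : Matrix (Fin (k + l)) (Fin k ⊕ Fin l) ℂ)
    (hU : Uᴴ * U = 1)
    (Uk : Matrix (Fin (k + l)) (Fin k) ℂ)
    (hUk : Uk = Matrix.of fun i a => U i (Sum.inl a))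
    (Ul : Matrix (Fin (k + l)) (Fin l) ℂ)
    (hUl : Ul = Matrix.of fun i a => U i (Sum.inr a))
    (hA : IsUnit A.det)
    (hC : IsUnit (Ukᴴ * A⁻¹ * Uk).det) :
    U * Matrix.fromBlocks (0 : Matrix (Fin k) (Fin k) ℂ) 0 0 (Ulᴴ * A * Ul)⁻¹ * Uᴴ
      = A⁻¹ - A⁻¹ * Uk * (Ukᴴ * A⁻¹ * Uk)⁻¹ * Ukᴴ * A⁻¹ := by
  subst hUk hUl
  have hU' : U * Uᴴ = 1 := (mul_eq_one_comm_of_equiv finSumFinEquiv.symm).mpr hU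
  exact mul_fromBlocks_zero_inv_mul_conjTranspose_eq_deflatedInv hU hU' hA hC

/-- Resolvent of a compression: with `U = (U_k, U_l)` unitary, `B = U_lᴴ A U_l`,
`U · diag(0, B⁻¹) · Uᴴ = A⁻¹ − A⁻¹ U_k (U_kᴴ A⁻¹ U_k)⁻¹ U_kᴴ A⁻¹`. -/
theorem stmt_2 (k l : ℕ)
    (A : Matrix (Fin (k + l)) (Fin (k + l)) ℂ)
    (U : Matrix (Fin (k + l)) (Fin k ⊕ Fin l) ℂ)
    (hU : Uᴴ * U = 1)
    (Uk : Matrix (Fin (k + l)) (Fin k) ℂ)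
    (hUk : Uk = Matrix.of fun i a => U i (Sum.inl a))
    (Ul : Matrix (Fin (k + l)) (Fin l) ℂ)
    (hUl : Ul = Matrix.of fun i a => U i (Sum.inr a))
    (hA : IsUnit A.det)
    (hB : IsUnit (Ulᴴ * A * Ul).det)
    (hC : IsUnit (Ukᴴ * A⁻¹ * Uk).det) :
    U * Matrix.fromBlocks (0 : Matrix (Fin k) (Fin k) ℂ) 0 0 (Ulᴴ * A * Ul)⁻¹ * Uᴴ
      = A⁻¹ - A⁻¹ * Uk * (Ukᴴ * A⁻¹ * Uk)⁻¹ * Ukᴴ * A⁻¹ :=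
  stmt_2_general k l A U hU Uk hUk Ul hUl hA hC
end

section
/- Let A ∈ M_n(ℂ) with Re A := (A+A*)/2 positive definite, and U_k ∈ ℂ^{n×k} with U_k* U_k = 1_k. Then ‖A^{-1} U_k (U_k* A^{-1} U_k)^{-1} U_k* A^{-1}‖ ≤ ‖(Re A)^{-1}‖. -/
/-!
Write `H = Re A` and `M = Uᴴ A⁻¹ U`. Since `Re (A⁻¹) = A⁻ᴴ H A⁻¹ = A⁻¹ H A⁻ᴴ`, the real part of
the compression is `Re M = (A⁻¹ U)ᴴ H (A⁻¹ U) = (A⁻ᴴ U)ᴴ H (A⁻ᴴ U)`, which is positive definite, so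
`M` is invertible. Given `x`, put `c = M⁻¹ Uᴴ A⁻¹ x`, `v = A⁻¹ U c` (the image of `x`) and
`q = A⁻ᴴ U c`. Then `⟨v, H v⟩`, `⟨q, H q⟩` and `⟨q, x⟩` all have real part `Re ⟨c, M c⟩`.
Together with `‖w‖² ≤ ‖H⁻¹‖ Re ⟨w, H w⟩` (write `w = S p` with `S = H^{-1/2}`, so that
`‖S‖² = ‖H⁻¹‖`) and Cauchy–Schwarz this gives `‖q‖ ≤ ‖H⁻¹‖ ‖x‖` and then `‖v‖ ≤ ‖H⁻¹‖ ‖x‖`.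
-/

open Matrix
open scoped ComplexOrder

namespace Matrix

variable {ι κ 𝕜 : Type*} [RCLike 𝕜]

open RCLike
open scoped ComplexConjugate

def hermitianPart (A : Matrix ι ι 𝕜) : Matrix ι ι 𝕜 := (1 / 2 : 𝕜) • (A + Aᴴ)

lemma star_mulVec_dotProduct [Fintype ι] [Fintype κ] (C : Matrix ι κ 𝕜) (c : κ → 𝕜)
    (w : ι → 𝕜) :
    star (C *ᵥ c) ⬝ᵥ w = star c ⬝ᵥ (Cᴴ *ᵥ w) := by
  rw [star_mulVec, ← dotProduct_mulVec]

lemma re_dotProduct_hermitianPart_mulVec [Fintype ι] (A : Matrix ι ι 𝕜) (x : ι → 𝕜) :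
    re (star x ⬝ᵥ (hermitianPart A *ᵥ x)) = re (star x ⬝ᵥ (A *ᵥ x)) := by
  have hconj : star x ⬝ᵥ (Aᴴ *ᵥ x) = conj (star x ⬝ᵥ (A *ᵥ x)) := by
    rw [← star_def, ← star_mulVec_dotProduct, star_dotProduct]
  rw [hermitianPart, smul_mulVec, add_mulVec, dotProduct_smul, dotProduct_add, hconj, add_conj,
    smul_eq_mul, ← mul_assoc, one_div_mul_cancel two_ne_zero, one_mul, ofReal_re]

lemma hermitianPart_conjTranspose (A : Matrix ι ι 𝕜) : hermitianPart Aᴴ = hermitianPart A := by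
  rw [hermitianPart, hermitianPart, conjTranspose_conjTranspose, add_comm]

lemma conjTranspose_mul_hermitianPart_mul [Fintype ι] (A : Matrix ι ι 𝕜) (C : Matrix ι κ 𝕜) :
    Cᴴ * hermitianPart A * C = hermitianPart (Cᴴ * A * C) := by
  simp only [hermitianPart, Matrix.mul_smul, Matrix.smul_mul, Matrix.mul_add, Matrix.add_mul,
    conjTranspose_mul, conjTranspose_conjTranspose, Matrix.mul_assoc]

lemma isUnit_of_posDef_hermitianPart [Fintype ι] [DecidableEq ι] {A : Matrix ι ι 𝕜}
    (hA : (hermitianPart A).PosDef) : IsUnit A := by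
  refine mulVec_injective_iff_isUnit.mp <|
    (injective_iff_map_eq_zero A.mulVecLin).mpr fun x hx ↦ ?_
  by_contra hx0
  have hpos := hA.re_dotProduct_pos hx0
  rw [re_dotProduct_hermitianPart_mulVec, show A *ᵥ x = 0 from hx, dotProduct_zero,
    map_zero] at hpos
  exact hpos.false

lemma hermitianPart_inv [Fintype ι] [DecidableEq ι] {A : Matrix ι ι 𝕜} (hA : IsUnit A) :
    hermitianPart A⁻¹ = A⁻¹ᴴ * hermitianPart A * A⁻¹ := by
  rw [conjTranspose_mul_hermitianPart_mul, Matrix.mul_assoc,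
    mul_nonsing_inv _ ((isUnit_iff_isUnit_det A).mp hA), Matrix.mul_one,
    hermitianPart_conjTranspose]

open scoped MatrixOrder in
lemma PosDef.norm_sq_le [Fintype ι] [DecidableEq ι] {H : Matrix ι ι 𝕜} (hH : H.PosDef)
    (w : ι → 𝕜) :
    ‖WithLp.toLp 2 w‖ ^ 2 ≤ ‖toEuclideanCLM (𝕜 := 𝕜) H⁻¹‖ * re (star w ⬝ᵥ (H *ᵥ w)) := by
  set S := CFC.sqrt H⁻¹
  have hS : S * S = H⁻¹ := CFC.sqrt_mul_sqrt_self _ hH.inv.posSemidef.nonneg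
  have hSh : Sᴴ = S := (CFC.sqrt_nonneg H⁻¹).posSemidef.isHermitian
  have hHdet : IsUnit H.det := (isUnit_iff_isUnit_det H).mp hH.isUnit
  have hnormS : ‖toEuclideanCLM (𝕜 := 𝕜) S‖ ^ 2 = ‖toEuclideanCLM (𝕜 := 𝕜) H⁻¹‖ := by
    rw [sq, ← CStarRing.norm_star_mul_self, ← map_star, star_eq_conjTranspose, hSh, ← map_mul, hS]
  have hw : S *ᵥ ((S * H) *ᵥ w) = w := by
    rw [mulVec_mulVec, ← Matrix.mul_assoc, hS, nonsing_inv_mul _ hHdet, one_mulVec]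
  have hp : ‖WithLp.toLp 2 ((S * H) *ᵥ w)‖ ^ 2 = re (star w ⬝ᵥ (H *ᵥ w)) := by
    rw [← inner_self_eq_norm_sq (𝕜 := 𝕜), EuclideanSpace.inner_toLp_toLp, dotProduct_comm,
      star_mulVec_dotProduct, mulVec_mulVec, conjTranspose_mul, hSh, hH.isHermitian.eq,
      Matrix.mul_assoc, ← Matrix.mul_assoc S, hS, mul_nonsing_inv_cancel_left _ _ hHdet]
  calc ‖WithLp.toLp 2 w‖ ^ 2
        = ‖toEuclideanCLM (𝕜 := 𝕜) S (WithLp.toLp 2 ((S * H) *ᵥ w))‖ ^ 2 := by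
        rw [toEuclideanCLM_toLp, hw]
    _ ≤ (‖toEuclideanCLM (𝕜 := 𝕜) S‖ * ‖WithLp.toLp 2 ((S * H) *ᵥ w)‖) ^ 2 := by
        gcongr; exact ContinuousLinearMap.le_opNorm _ _
    _ = _ := by rw [mul_pow, hnormS, hp]

lemma PosDef.norm_le_of_re_dotProduct_eq [Fintype ι] [DecidableEq ι] {H : Matrix ι ι 𝕜}
    (hH : H.PosDef) {v q x : ι → 𝕜} (hv : re (star v ⬝ᵥ (H *ᵥ v)) = re (star q ⬝ᵥ x))
    (hq : re (star q ⬝ᵥ (H *ᵥ q)) = re (star q ⬝ᵥ x)) :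
    ‖WithLp.toLp 2 v‖ ≤ ‖toEuclideanCLM (𝕜 := 𝕜) H⁻¹‖ * ‖WithLp.toLp 2 x‖ := by
  set L := ‖toEuclideanCLM (𝕜 := 𝕜) H⁻¹‖
  have hCS : re (star q ⬝ᵥ x) ≤ ‖WithLp.toLp 2 q‖ * ‖WithLp.toLp 2 x‖ := by
    simpa only [EuclideanSpace.inner_toLp_toLp, dotProduct_comm x] using
      re_inner_le_norm (𝕜 := 𝕜) (WithLp.toLp 2 q) (WithLp.toLp 2 x)
  have hq' : ‖WithLp.toLp 2 q‖ ^ 2 ≤ L * re (star q ⬝ᵥ x) := hq ▸ hH.norm_sq_le q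
  have hv' : ‖WithLp.toLp 2 v‖ ^ 2 ≤ L * re (star q ⬝ᵥ x) := hv ▸ hH.norm_sq_le v
  have hL : 0 ≤ L := norm_nonneg _
  have hqx : ‖WithLp.toLp 2 q‖ ≤ L * ‖WithLp.toLp 2 x‖ := by
    -- `‖q‖² ≤ L ‖q‖ ‖x‖`, then cancel `‖q‖`
    nlinarith [mul_le_mul_of_nonneg_left hCS hL, mul_nonneg hL (norm_nonneg (WithLp.toLp 2 x))]
  have hvx : ‖WithLp.toLp 2 v‖ ^ 2 ≤ (L * ‖WithLp.toLp 2 x‖) ^ 2 := by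
    nlinarith [norm_nonneg (WithLp.toLp 2 q), norm_nonneg (WithLp.toLp 2 x)]
  exact le_of_pow_le_pow_left₀ two_ne_zero (by positivity) hvx

theorem norm_toEuclideanCLM_inv_compression_le [Fintype ι] [DecidableEq ι] [Fintype κ]
    [DecidableEq κ] {A : Matrix ι ι 𝕜} (hA : (hermitianPart A).PosDef) {U : Matrix ι κ 𝕜}
    (hU : Function.Injective U.mulVec) :
    ‖toEuclideanCLM (𝕜 := 𝕜) (A⁻¹ * U * (Uᴴ * A⁻¹ * U)⁻¹ * Uᴴ * A⁻¹)‖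
      ≤ ‖toEuclideanCLM (𝕜 := 𝕜) (hermitianPart A)⁻¹‖ := by
  have hAu := isUnit_of_posDef_hermitianPart hA
  set M := Uᴴ * A⁻¹ * U
  have hM₁ : hermitianPart M = (A⁻¹ * U)ᴴ * hermitianPart A * (A⁻¹ * U) := by
    rw [← conjTranspose_mul_hermitianPart_mul, hermitianPart_inv hAu, conjTranspose_mul]
    simp only [Matrix.mul_assoc]
  have hM₂ : hermitianPart M = (Aᴴ⁻¹ * U)ᴴ * hermitianPart A * (Aᴴ⁻¹ * U) := by
    rw [← conjTranspose_mul_hermitianPart_mul, ← hermitianPart_conjTranspose A⁻¹,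
      conjTranspose_nonsing_inv, hermitianPart_inv ((isUnit_conjTranspose A).mpr hAu),
      hermitianPart_conjTranspose, conjTranspose_mul, conjTranspose_nonsing_inv,
      conjTranspose_conjTranspose]
    simp only [Matrix.mul_assoc]
  have hMu : IsUnit M := by
    refine isUnit_of_posDef_hermitianPart (hM₁ ▸ hA.conjTranspose_mul_mul_same ?_)
    rw [show (A⁻¹ * U).mulVec = A⁻¹.mulVec ∘ U.mulVec from
      funext fun c ↦ (mulVec_mulVec c _ _).symm]
    exact (mulVec_injective_iff_isUnit.mpr (isUnit_nonsing_inv_iff.mpr hAu)).comp hU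
  refine ContinuousLinearMap.opNorm_le_bound _ (norm_nonneg _) fun x ↦ ?_
  obtain ⟨y, rfl⟩ : ∃ y, WithLp.toLp 2 y = x := ⟨x.ofLp, x.toLp_ofLp⟩
  set c := M⁻¹ *ᵥ ((Uᴴ * A⁻¹) *ᵥ y) with hc
  have hPy : (A⁻¹ * U * M⁻¹ * Uᴴ * A⁻¹) *ᵥ y = (A⁻¹ * U) *ᵥ c := by
    simp only [hc, mulVec_mulVec, Matrix.mul_assoc]
  have hMc : M *ᵥ c = (Uᴴ * A⁻¹) *ᵥ y := by
    rw [hc, mulVec_mulVec, mul_nonsing_inv _ ((isUnit_iff_isUnit_det M).mp hMu), one_mulVec]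
  have hcMc : star c ⬝ᵥ (M *ᵥ c) = star ((Aᴴ⁻¹ * U) *ᵥ c) ⬝ᵥ y := by
    rw [star_mulVec_dotProduct (Aᴴ⁻¹ * U), conjTranspose_mul, conjTranspose_nonsing_inv,
      conjTranspose_conjTranspose, hMc]
  rw [toEuclideanCLM_toLp, hPy]
  apply hA.norm_le_of_re_dotProduct_eq
  · rw [star_mulVec_dotProduct, mulVec_mulVec, mulVec_mulVec, ← hM₁,
      re_dotProduct_hermitianPart_mulVec, hcMc]
  · rw [star_mulVec_dotProduct, mulVec_mulVec, mulVec_mulVec, ← hM₂,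
      re_dotProduct_hermitianPart_mulVec, hcMc]

end Matrix

/-- If `Re A = (A + Aᴴ)/2` is positive definite and `U_k` has orthonormal columns, then
`‖A⁻¹ U_k (U_kᴴ A⁻¹ U_k)⁻¹ U_kᴴ A⁻¹‖ ≤ ‖(Re A)⁻¹‖` in operator norm. -/
theorem stmt_3 (n k : ℕ) (A : Matrix (Fin n) (Fin n) ℂ)
    (hRe : ((1 / 2 : ℂ) • (A + Aᴴ)).PosDef)
    (Uk : Matrix (Fin n) (Fin k) ℂ) (hUk : Ukᴴ * Uk = 1) :
    ‖Matrix.toEuclideanCLM (𝕜 := ℂ) (A⁻¹ * Uk * (Ukᴴ * A⁻¹ * Uk)⁻¹ * Ukᴴ * A⁻¹)‖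
      ≤ ‖Matrix.toEuclideanCLM (𝕜 := ℂ) (((1 / 2 : ℂ) • (A + Aᴴ))⁻¹)‖ :=
  norm_toEuclideanCLM_inv_compression_le (A := A) hRe <|
    Function.LeftInverse.injective (g := Ukᴴ.mulVec) fun c ↦ by
      rw [mulVec_mulVec, hUk, one_mulVec]
end

section
/- Let X ∈ M_n(ℂ), z ∈ ℂ, t > 0, N > 0, η_z = √(t/N), and suppose t·(1/N) tr H_z(η_z) < 1 where H_z(η) = (η² + X_z*X_z)^{-1}, X_z = X−z. Define φ_z(η) = η²/t − (1/N) tr log(η² + X_z*X_z). Then φ_z(η) − φ_z(η_z) ≥ −1/N for all η ≥ 0. -/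
/-!
Diagonalise `A = X_zᴴ X_z` with eigenvalues `μ_i > 0`. Then `log det (s + A) = ∑ log (s + μ_i)`
is concave in `s = η²` with derivative `tr (s + A)⁻¹`, so with `a = η_z² = t / N` and
`T = tr H_z(η_z) ≥ 0` we get `φ_z(η) - φ_z(η_z) ≥ (s - a) (1 / t - T / N)`. The hypothesis makes the
second factor positive, so this is `≥ 0` when `s ≥ a`; when `s < a` it is at least
`(s - a) / t ≥ -a / t = -1 / N`.
-/

open Matrix
open scoped ComplexOrder

theorem Real.log_sub_log_le {x y : ℝ} (hx : 0 < x) (hy : 0 < y) :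
    Real.log x - Real.log y ≤ (x - y) / y := by
  have h := Real.log_le_sub_one_of_pos (div_pos hx hy)
  rwa [Real.log_div hx.ne' hy.ne', div_sub_one hy.ne'] at h

/-- With `φ(s) = s / t - N⁻¹ L(s)`: if `T` is a supergradient of `L` at `a = t / N` and
`t N⁻¹ T < 1`, then `φ(s) ≥ φ(a) - 1 / N` for every `s ≥ 0`. -/
lemma neg_inv_le_sub_of_le_tangent {t N a s T La Ls : ℝ} (ht : 0 < t) (hN : 0 < N)
    (ha : a = t / N) (hs : 0 ≤ s) (hT : 0 ≤ T) (hfix : t * (N⁻¹ * T) < 1)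
    (hL : Ls - La ≤ (s - a) * T) :
    -(1 / N) ≤ (s / t - N⁻¹ * Ls) - (a / t - N⁻¹ * La) := by
  have hL' : N⁻¹ * (Ls - La) ≤ N⁻¹ * ((s - a) * T) :=
    mul_le_mul_of_nonneg_left hL (inv_nonneg.2 hN.le)
  have ha_div : a / t = 1 / N := by rw [ha]; field_simp
  rcases le_or_gt a s with has | has
  · have htangent : N⁻¹ * ((s - a) * T) ≤ (s - a) / t := by
      rw [le_div_iff₀ ht]
      nlinarith
    have : 0 ≤ 1 / N := by positivity
    linarith [sub_div s a t]
  · have htangent : N⁻¹ * ((s - a) * T) ≤ 0 :=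
      mul_nonpos_of_nonneg_of_nonpos (inv_nonneg.2 hN.le)
        (mul_nonpos_of_nonpos_of_nonneg (by linarith) hT)
    have : 0 ≤ s / t := by positivity
    linarith

namespace Matrix

variable {𝕜 ι : Type*} [RCLike 𝕜] [Fintype ι] [DecidableEq ι]

section UnitaryConj

open Unitary

variable (u : unitaryGroup ι 𝕜) (M : Matrix ι ι 𝕜)

lemma det_conjStarAlgAut : (conjStarAlgAut 𝕜 _ u M).det = M.det := by
  rw [conjStarAlgAut_apply, det_mul_comm, ← Matrix.mul_assoc, coe_star_mul_self, Matrix.one_mul]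

lemma trace_conjStarAlgAut : (conjStarAlgAut 𝕜 _ u M).trace = M.trace := by
  rw [conjStarAlgAut_apply, trace_mul_cycle, coe_star_mul_self, Matrix.one_mul]

lemma inv_conjStarAlgAut : (conjStarAlgAut 𝕜 _ u M)⁻¹ = conjStarAlgAut 𝕜 _ u M⁻¹ := by
  have hu : (u : Matrix ι ι 𝕜)⁻¹ = star (u : Matrix ι ι 𝕜) :=
    inv_eq_left_inv (coe_star_mul_self u)
  have hu' : (star (u : Matrix ι ι 𝕜))⁻¹ = u :=
    inv_eq_left_inv (coe_mul_star_self u)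
  rw [conjStarAlgAut_apply, conjStarAlgAut_apply, Matrix.mul_inv_rev, Matrix.mul_inv_rev, hu, hu',
    Matrix.mul_assoc]

end UnitaryConj

variable {A : Matrix ι ι 𝕜}

namespace IsHermitian

lemma real_smul_one_add_eq (hA : A.IsHermitian) (x : ℝ) :
    (x : 𝕜) • 1 + A = Unitary.conjStarAlgAut 𝕜 _ hA.eigenvectorUnitary
      (diagonal fun i ↦ ((x + hA.eigenvalues i : ℝ) : 𝕜)) := by
  have hdiag : (diagonal fun i ↦ ((x + hA.eigenvalues i : ℝ) : 𝕜)) =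
      (x : 𝕜) • 1 + diagonal (RCLike.ofReal ∘ hA.eigenvalues) := by
    rw [smul_one_eq_diagonal, diagonal_add]
    congr 1
    funext i
    simp
  conv_lhs => rw [hA.spectral_theorem]
  rw [hdiag, map_add, map_smul, map_one]

lemma det_real_smul_one_add (hA : A.IsHermitian) (x : ℝ) :
    ((x : 𝕜) • 1 + A).det = ((∏ i, (x + hA.eigenvalues i) : ℝ) : 𝕜) := by
  rw [hA.real_smul_one_add_eq, det_conjStarAlgAut, det_diagonal, RCLike.ofReal_prod]

lemma trace_inv_real_smul_one_add (hA : A.IsHermitian) {x : ℝ}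
    (hx : ∀ i, x + hA.eigenvalues i ≠ 0) :
    ((x : 𝕜) • 1 + A)⁻¹.trace = ((∑ i, (x + hA.eigenvalues i)⁻¹ : ℝ) : 𝕜) := by
  have hinv : (diagonal fun i ↦ ((x + hA.eigenvalues i : ℝ) : 𝕜))⁻¹ =
      diagonal fun i ↦ (((x + hA.eigenvalues i)⁻¹ : ℝ) : 𝕜) := by
    refine inv_eq_left_inv ?_
    rw [diagonal_mul_diagonal, ← diagonal_one]
    congr 1
    funext i
    rw [← RCLike.ofReal_mul, inv_mul_cancel₀ (hx i), RCLike.ofReal_one]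
  rw [hA.real_smul_one_add_eq, inv_conjStarAlgAut, trace_conjStarAlgAut, hinv, trace_diagonal,
    RCLike.ofReal_sum]

end IsHermitian

namespace PosDef

lemma add_eigenvalues_pos (hA : A.PosDef) {x : ℝ} (hx : 0 ≤ x) (i : ι) :
    0 < x + hA.isHermitian.eigenvalues i :=
  add_pos_of_nonneg_of_pos hx (hA.eigenvalues_pos i)

lemma trace_inv_real_smul_one_add (hA : A.PosDef) {x : ℝ} (hx : 0 ≤ x) :
    ((x : 𝕜) • 1 + A)⁻¹.trace = ((∑ i, (x + hA.isHermitian.eigenvalues i)⁻¹ : ℝ) : 𝕜) :=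
  hA.isHermitian.trace_inv_real_smul_one_add fun i ↦ (hA.add_eigenvalues_pos hx i).ne'

lemma re_trace_inv_real_smul_one_add_nonneg (hA : A.PosDef) {x : ℝ} (hx : 0 ≤ x) :
    0 ≤ RCLike.re ((x : 𝕜) • 1 + A)⁻¹.trace := by
  rw [hA.trace_inv_real_smul_one_add hx, RCLike.ofReal_re]
  exact Finset.sum_nonneg fun i _ ↦ (inv_pos.2 (hA.add_eigenvalues_pos hx i)).le

lemma log_det_real_smul_one_add_sub_le (hA : A.PosDef) {x y : ℝ} (hx : 0 ≤ x) (hy : 0 ≤ y) :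
    Real.log (RCLike.re ((x : 𝕜) • 1 + A).det) - Real.log (RCLike.re ((y : 𝕜) • 1 + A).det) ≤
      (x - y) * RCLike.re ((y : 𝕜) • 1 + A)⁻¹.trace := by
  set μ := hA.isHermitian.eigenvalues
  have hxμ := hA.add_eigenvalues_pos hx
  have hyμ := hA.add_eigenvalues_pos hy
  rw [hA.isHermitian.det_real_smul_one_add, hA.isHermitian.det_real_smul_one_add,
    hA.trace_inv_real_smul_one_add hy, RCLike.ofReal_re, RCLike.ofReal_re, RCLike.ofReal_re,
    Real.log_prod fun i _ ↦ (hxμ i).ne', Real.log_prod fun i _ ↦ (hyμ i).ne',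
    ← Finset.sum_sub_distrib, Finset.mul_sum]
  refine Finset.sum_le_sum fun i _ ↦ ?_
  calc Real.log (x + μ i) - Real.log (y + μ i) ≤ (x + μ i - (y + μ i)) / (y + μ i) :=
        Real.log_sub_log_le (hxμ i) (hyμ i)
    _ = (x - y) * (y + μ i)⁻¹ := by ring

end PosDef

end Matrix

theorem stmt_8_general (n N : ℕ) (hN : 0 < N)
    (X : Matrix (Fin n) (Fin n) ℂ) (z : ℂ) (t : ℝ) (ht : 0 < t)
    (hpd : ((X - z • 1)ᴴ * (X - z • 1)).PosDef)
    (ηz : ℝ) (hηz : ηz = Real.sqrt (t / N))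
    (hfix : t * ((N : ℝ)⁻¹ *
        ((((ηz : ℂ) ^ 2 • 1 + (X - z • 1)ᴴ * (X - z • 1))⁻¹ :
            Matrix (Fin n) (Fin n) ℂ).trace).re) < 1)
    (η : ℝ) :
    (η ^ 2 / t
        - (N : ℝ)⁻¹ * Real.log (((η : ℂ) ^ 2 • 1 + (X - z • 1)ᴴ * (X - z • 1)).det.re))
      - (ηz ^ 2 / t
        - (N : ℝ)⁻¹ * Real.log (((ηz : ℂ) ^ 2 • 1 + (X - z • 1)ᴴ * (X - z • 1)).det.re))
      ≥ -(1 / N : ℝ) := by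
  have hNpos : (0 : ℝ) < N := by exact_mod_cast hN
  have hηz2 : ηz ^ 2 = t / N := by rw [hηz, Real.sq_sqrt (by positivity)]
  simp only [← Complex.ofReal_pow] at hfix ⊢
  simp only [← RCLike.ofReal_eq_complex_ofReal, ← RCLike.re_to_complex] at hfix ⊢
  exact neg_inv_le_sub_of_le_tangent ht hNpos hηz2 (sq_nonneg η)
    (hpd.re_trace_inv_real_smul_one_add_nonneg (sq_nonneg ηz)) hfix
    (hpd.log_det_real_smul_one_add_sub_le (sq_nonneg η) (sq_nonneg ηz))

/-- If `η_z = √(t/N)` and `t · (1/N) tr H_z(η_z) < 1`, then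
`φ_z(η) − φ_z(η_z) ≥ −1/N` for all `η ≥ 0`, where
`φ_z(η) = η²/t − (1/N) tr log(η² + X_zᴴX_z)` (here `tr log = log det`). -/
theorem stmt_8 (n N : ℕ) (hN : 0 < N)
    (X : Matrix (Fin n) (Fin n) ℂ) (z : ℂ) (t : ℝ) (ht : 0 < t)
    (hpd : ((X - z • 1)ᴴ * (X - z • 1)).PosDef)
    (ηz : ℝ) (hηz : ηz = Real.sqrt (t / N))
    (hfix : t * ((N : ℝ)⁻¹ *
        ((((ηz : ℂ) ^ 2 • 1 + (X - z • 1)ᴴ * (X - z • 1))⁻¹ :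
            Matrix (Fin n) (Fin n) ℂ).trace).re) < 1)
    (η : ℝ) (hη : 0 ≤ η) :
    (η ^ 2 / t
        - (N : ℝ)⁻¹ * Real.log (((η : ℂ) ^ 2 • 1 + (X - z • 1)ᴴ * (X - z • 1)).det.re))
      - (ηz ^ 2 / t
        - (N : ℝ)⁻¹ * Real.log (((ηz : ℂ) ^ 2 • 1 + (X - z • 1)ᴴ * (X - z • 1)).det.re))
      ≥ -(1 / N : ℝ) :=
  stmt_8_general n N hN X z t ht hpd ηz hηz hfix η
end
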